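/- If A and B are positive semidefinite s×s matrices with A ≥ B (Loewner order), then sqrt(A) ≥ sqrt(B), i.e., the matrix square root is operator monotone. -/

import Mathlib

open Matrix
open scoped ComplexOrder

noncomputable def Matrix.PosSemidef.sqrt {𝕜 : Type*} [RCLike 𝕜] {n : Type*} [Fintype n]
    [DecidableEq n] {A : Matrix n n 𝕜} (hA : A.PosSemidef) : Matrix n n 𝕜 :=
  hA.1.eigenvectorUnitary.1 * diagonal ((↑) ∘ (√·) ∘ hA.1.eigenvalues) *
  (star hA.1.eigenvectorUnitary : Matrix n n 𝕜)

-- The L2 operator norm makes square matrices a C⋆-algebra, as `CFC.sqrt_le_sqrt` requires.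
open scoped MatrixOrder Matrix.Norms.L2Operator

theorem Matrix.PosSemidef.sqrt_eq_cfcSqrt {𝕜 : Type*} [RCLike 𝕜] {n : Type*} [Fintype n]
    [DecidableEq n] {A : Matrix n n 𝕜} (hA : A.PosSemidef) : hA.sqrt = CFC.sqrt A := by
  rw [CFC.sqrt_eq_real_sqrt A hA.nonneg, cfcₙ_eq_cfc, hA.1.cfc_eq]
  rfl

theorem matrix_sqrt_operator_monotone
    {s : ℕ} (A B : Matrix (Fin s) (Fin s) ℂ)
    (hA : A.PosSemidef) (hB : B.PosSemidef)
    (hAB : (A - B).PosSemidef) :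
    (hA.sqrt - hB.sqrt).PosSemidef := by
  rw [hA.sqrt_eq_cfcSqrt, hB.sqrt_eq_cfcSqrt, ← le_iff]
  exact CFC.sqrt_le_sqrt B A hAB
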